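/- arXiv:1912.10719 — 5 statements merged into one kernel-verified Lean document; each statement's English description precedes it below -/
import Mathlib

section
/- Let P be a probability measure with density p supported on an open convex set X ⊆ R^d, such that for every R > 0 there exist 0 < λ_R ≤ Λ_R with λ_R ≤ p(x) ≤ Λ_R for all x ∈ X ∩ RB_d. Let φ be a convex potential with ∇φ♯P = U_d (the spherical uniform on B_d). Then ∂φ(X) ∩ S^{d-1} = ∅: no point in the interior of the support can have a subgradient on the unit sphere. -/
/-!
Let `z ∈ ∂φ(x)` with `‖z‖ = 1` and `x ∈ X`, and consider the small ball `K` of radius `η s` around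
`x + s z`. Monotonicity of `∂φ` forces every subgradient `y` of `φ` on `K` with `‖y‖ ≤ 1` to satisfy
`1 - ⟪z, y⟫ ≤ η ‖y - z‖`, which confines it to a cap of height `2η²` and radius `2η` around `z`.
The transport identity then compares `P(K) ≳ η^d` with the `U_d`-mass of this cap, which is
`≲ η^(d+1)` because `u_d` is bounded away from the origin; letting `η → 0` gives a contradiction.
-/

open Metric MeasureTheory Real Classical
open RealInnerProductSpace
open scoped ENNReal
open Module Set

variable {E : Type*} [NormedAddCommGroup E] [InnerProductSpace ℝ E]

theorem exists_orthonormalBasis_apply_eq [FiniteDimensional ℝ E] {z : E} (hz : ‖z‖ = 1) :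
    ∃ (i₀ : Fin (finrank ℝ E)) (b : OrthonormalBasis (Fin (finrank ℝ E)) ℝ E), b i₀ = z := by
  have : Nontrivial E := nontrivial_of_ne z 0 (by rintro rfl; simp at hz)
  let i₀ : Fin (finrank ℝ E) := ⟨0, finrank_pos⟩
  have hv : Orthonormal ℝ (({i₀} : Set _).domRestrict fun _ ↦ z) :=
    orthonormal_subsingleton_iff.2 fun _ ↦ hz
  obtain ⟨b, hb⟩ := hv.exists_orthonormalBasis_extension_of_card_eq (by simp)
  exact ⟨i₀, b, hb i₀ rfl⟩

theorem volume_slab_inter_closedBall_le [FiniteDimensional ℝ E] [MeasurableSpace E]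
    [BorelSpace E] {z : E} (hz : ‖z‖ = 1) (α β : ℝ) (c : E) (r : ℝ) :
    volume ({y | ⟪z, y⟫ ∈ Icc α β} ∩ closedBall c r) ≤
      ENNReal.ofReal (β - α) * ENNReal.ofReal (2 * r) ^ (finrank ℝ E - 1) := by
  obtain ⟨i₀, b, hb⟩ := exists_orthonormalBasis_apply_eq hz
  let box : Fin (finrank ℝ E) → Set ℝ := fun i ↦
    if i = i₀ then Icc α β else Icc (⟪b i, c⟫ - r) (⟪b i, c⟫ + r)
  let coord : E → Fin (finrank ℝ E) → ℝ := fun y ↦ WithLp.ofLp (b.repr y)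
  have hcoord : MeasurePreserving coord :=
    (PiLp.volume_preserving_ofLp _).comp b.measurePreserving_repr
  have hsub : {y | ⟪z, y⟫ ∈ Icc α β} ∩ closedBall c r ⊆ coord ⁻¹' univ.pi box := by
    rintro y ⟨hyz, hyc⟩ i -
    simp only [coord, box, b.repr_apply_apply]
    split_ifs with hi
    · rwa [hi, hb]
    · have h := (abs_real_inner_le_norm (b i) (y - c)).trans
        (by simpa [b.norm_eq_one, ← dist_eq_norm] using hyc)
      rw [inner_sub_right, abs_le] at h
      constructor <;> linarith
  calc volume ({y | ⟪z, y⟫ ∈ Icc α β} ∩ closedBall c r)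
      ≤ volume (coord ⁻¹' univ.pi box) := measure_mono hsub
    _ = ∏ i, volume (box i) := by
      rw [hcoord.measure_preimage (MeasurableSet.univ_pi fun i ↦ by
        dsimp only [box]; split_ifs <;> exact measurableSet_Icc).nullMeasurableSet, volume_pi_pi]
    _ = _ := by
      have hbox : ∀ i ∈ ({i₀}ᶜ : Finset _), volume (box i) = ENNReal.ofReal (2 * r) :=
        fun i hi ↦ by simp only [box, if_neg (by simpa using hi), Real.volume_Icc]; ring_nf
      rw [Fintype.prod_eq_mul_prod_compl i₀, Finset.prod_congr rfl hbox, Finset.prod_const,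
        Finset.card_compl, Finset.card_singleton, Fintype.card_fin]
      simp only [box, if_pos, Real.volume_Icc]

def subdifferential (φ : E → ℝ) (x : E) : Set E := {z | ∀ w, φ x + ⟪z, w - x⟫ ≤ φ w}

theorem inner_sub_nonneg_of_mem_subdifferential {φ : E → ℝ} {x x' z y : E}
    (hz : z ∈ subdifferential φ x) (hy : y ∈ subdifferential φ x') :
    0 ≤ ⟪y - z, x' - x⟫ := by
  have hzx' := hz x'
  have hyx := hy x
  rw [← neg_sub x', inner_neg_right] at hyx
  rw [inner_sub_left]
  linarith

theorem one_sub_inner_le_of_inner_sub_nonneg {z y v : E} {s η : ℝ} (hz : ‖z‖ = 1)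
    (hs : 0 < s) (hv : ‖v - s • z‖ ≤ η * s) (h : 0 ≤ ⟪y - z, v⟫) :
    1 - ⟪z, y⟫ ≤ η * ‖y - z‖ := by
  have hsplit : ⟪y - z, v⟫ = s * (⟪z, y⟫ - 1) + ⟪y - z, v - s • z⟫ := by
    have hzz : ⟪y - z, z⟫ = ⟪z, y⟫ - 1 := by
      rw [inner_sub_left, real_inner_self_eq_norm_sq, hz, real_inner_comm, one_pow]
    rw [inner_sub_right, real_inner_smul_right, hzz]
    ring
  have hcs : ⟪y - z, v - s • z⟫ ≤ ‖y - z‖ * (η * s) :=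
    (real_inner_le_norm _ _).trans (mul_le_mul_of_nonneg_left hv (norm_nonneg _))
  have : s * (1 - ⟪z, y⟫) ≤ s * (η * ‖y - z‖) := by nlinarith
  exact le_of_mul_le_mul_left this hs

theorem norm_sub_le_of_one_sub_inner_le {z y : E} {η : ℝ} (hz : ‖z‖ = 1) (hy : ‖y‖ ≤ 1)
    (hη : 0 ≤ η) (h : 1 - ⟪z, y⟫ ≤ η * ‖y - z‖) : ‖y - z‖ ≤ 2 * η := by
  have hsq : ‖y - z‖ ^ 2 ≤ 2 * (1 - ⟪z, y⟫) := by
    rw [norm_sub_sq_real, hz, real_inner_comm]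
    nlinarith [norm_nonneg y]
  nlinarith [norm_nonneg (y - z)]

theorem subdifferential_image_ball_inter_closedBall_subset {φ : E → ℝ} {x z : E}
    (hz : z ∈ subdifferential φ x) (hz1 : ‖z‖ = 1) {s η : ℝ} (hs : 0 < s) (hη : 0 ≤ η) :
    (⋃ x' ∈ ball (x + s • z) (η * s), subdifferential φ x') ∩ closedBall 0 1 ⊆
      {y | ⟪z, y⟫ ∈ Icc (1 - 2 * η ^ 2) 1} ∩ closedBall z (2 * η) := by
  rintro y ⟨hy, hy1⟩
  obtain ⟨x', hx', hyx'⟩ := mem_iUnion₂.1 hy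
  rw [mem_closedBall_zero_iff] at hy1
  have hcap : 1 - ⟪z, y⟫ ≤ η * ‖y - z‖ :=
    one_sub_inner_le_of_inner_sub_nonneg hz1 hs
      (by rw [sub_sub, ← dist_eq_norm]; exact (mem_ball.1 hx').le)
      (inner_sub_nonneg_of_mem_subdifferential hz hyx')
  have hdist := norm_sub_le_of_one_sub_inner_le hz1 hy1 hη hcap
  have hzy : ⟪z, y⟫ ≤ 1 := (real_inner_le_norm z y).trans (by rw [hz1]; linarith)
  exact ⟨⟨by nlinarith, hzy⟩, mem_closedBall_iff_norm.2 hdist⟩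

theorem ofReal_mul_measure_le_of_setLIntegral_eq {α : Type*} [MeasurableSpace α]
    {μ ν : Measure α} {p : α → ℝ} {u : α → ℝ≥0∞} {K S T C : Set α} {lam : ℝ} {M : ℝ≥0∞}
    (hK : MeasurableSet K) (hT : MeasurableSet T) (hC : MeasurableSet C)
    (hp : ∀ x ∈ K, lam ≤ p x) (hu : ∀ y ∈ C, u y ≤ M) (hu0 : ∀ y ∉ T, u y = 0)
    (hSTC : S ∩ T ⊆ C) (hmass : ∫⁻ y in S, u y ∂ν = ∫⁻ x in K, ENNReal.ofReal (p x) ∂μ) :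
    ENNReal.ofReal lam * μ K ≤ M * ν C := by
  have hu_indicator : T.indicator u = u := by
    ext y
    by_cases hy : y ∈ T <;> simp [hy, hu0]
  calc ENNReal.ofReal lam * μ K = ∫⁻ _ in K, ENNReal.ofReal lam ∂μ := (setLIntegral_const K _).symm
    _ ≤ ∫⁻ x in K, ENNReal.ofReal (p x) ∂μ :=
      setLIntegral_mono' hK fun x hx ↦ ENNReal.ofReal_le_ofReal (hp x hx)
    _ = ∫⁻ y in S ∩ T, u y ∂ν := by
      rw [← hmass, ← hu_indicator, lintegral_indicator hT, Measure.restrict_restrict hT,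
        inter_comm, hu_indicator]
    _ ≤ ∫⁻ y in C, u y ∂ν := lintegral_mono_set hSTC
    _ ≤ ∫⁻ _ in C, M ∂ν := setLIntegral_mono' hC hu
    _ = M * ν C := setLIntegral_const C M

theorem mul_volume_ball_le_of_mem_subdifferential [FiniteDimensional ℝ E] [MeasurableSpace E]
    [BorelSpace E] {φ p : E → ℝ} {u : E → ℝ≥0∞} {x z : E} {s η lam M : ℝ}
    (hz : z ∈ subdifferential φ x) (hz1 : ‖z‖ = 1) (hs : 0 < s) (hη : 0 < η) (hη2 : η ≤ 1 / 2)
    (hlam : 0 ≤ lam) (hM : 0 ≤ M) (hp : ∀ x' ∈ ball x (2 * s), lam ≤ p x')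
    (hu : ∀ y, 1 / 2 ≤ ‖y‖ → u y ≤ ENNReal.ofReal M) (hu0 : ∀ y ∉ closedBall 0 1, u y = 0)
    (htransport : ∀ A, MeasurableSet A →
      ∫⁻ y in ⋃ x ∈ A, subdifferential φ x, u y = ∫⁻ x in A, ENNReal.ofReal (p x)) :
    lam * ((η * s) ^ finrank ℝ E * (volume (ball (0 : E) 1)).toReal) ≤
      M * (2 * η ^ 2 * (4 * η) ^ (finrank ℝ E - 1)) := by
  set K := ball (x + s • z) (η * s)
  set C := {y | ⟪z, y⟫ ∈ Icc (1 - 2 * η ^ 2) 1} ∩ closedBall z (2 * η)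
  have hKx : K ⊆ ball x (2 * s) := ball_subset_ball' <| by
    rw [dist_self_add_left, norm_smul, hz1, Real.norm_of_nonneg hs.le]
    nlinarith
  have hC : MeasurableSet C :=
    ((isClosed_Icc.preimage (continuous_const.inner continuous_id)).inter
      isClosed_closedBall).measurableSet
  have hCu : ∀ y ∈ C, u y ≤ ENNReal.ofReal M := fun y hy ↦ hu y <| by
    have := real_inner_le_norm z y
    rw [hz1, one_mul] at this
    nlinarith [hy.1.1]
  have hmass := ofReal_mul_measure_le_of_setLIntegral_eq measurableSet_ball
    measurableSet_closedBall hC (fun x' hx' ↦ hp x' (hKx hx')) hCu hu0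
    (subdifferential_image_ball_inter_closedBall_subset hz hz1 hs hη.le)
    (htransport K measurableSet_ball)
  have hvol := volume_slab_inter_closedBall_le hz1 (1 - 2 * η ^ 2) 1 z (2 * η)
  rw [sub_sub_cancel, show 2 * (2 * η) = 4 * η by ring] at hvol
  rw [Measure.addHaar_ball_of_pos _ _ (by positivity),
    ← ENNReal.ofReal_toReal (measure_ball_lt_top (x := (0 : E)) (r := 1)).ne] at hmass
  rw [← ENNReal.ofReal_le_ofReal_iff (by positivity), ENNReal.ofReal_mul hlam,
    ENNReal.ofReal_mul (by positivity), ENNReal.ofReal_mul hM, ENNReal.ofReal_mul (by positivity),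
    ENNReal.ofReal_pow (by positivity : (0 : ℝ) ≤ 4 * η)]
  exact hmass.trans (by gcongr)

theorem not_forall_mul_pow_le_mul_pow_succ {c : ℝ} (hc : 0 < c) (C : ℝ) (n : ℕ) :
    ¬ ∀ η : ℝ, 0 < η → η ≤ 1 / 2 → c * η ^ n ≤ C * η ^ (n + 1) := by
  intro h
  set η := min (1 / 2) (c / (2 * |C| + 1))
  have hη : 0 < η := lt_min (by norm_num) (by positivity)
  have hcη : c ≤ C * η := by
    refine le_of_mul_le_mul_right ?_ (pow_pos hη n)
    simpa [pow_succ, mul_assoc, mul_comm η] using h η hη (min_le_left _ _)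
  have hCη : C * η ≤ |C| * (c / (2 * |C| + 1)) :=
    (mul_le_mul_of_nonneg_right (le_abs_self C) hη.le).trans
      (mul_le_mul_of_nonneg_left (min_le_right _ _) (abs_nonneg C))
  have : |C| * (c / (2 * |C| + 1)) < c := by
    rw [mul_div_assoc', div_lt_iff₀ (by positivity)]
    nlinarith [abs_nonneg C]
  linarith

theorem one_div_mul_pow_le {a t : ℝ} (ha : 0 < a) (ht : 1 / 2 ≤ t) (n : ℕ) :
    1 / (a * t ^ n) ≤ 2 ^ n / a := by
  calc 1 / (a * t ^ n) ≤ 1 / (a * (1 / 2) ^ n) := by gcongr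
    _ = 2 ^ n / a := by rw [div_pow, one_pow]; field_simp

theorem subgradient_interior_not_on_sphere_general (d : ℕ) (hd : 1 ≤ d)
    (X : Set (EuclideanSpace ℝ (Fin d))) (hXo : IsOpen X)
    (p : EuclideanSpace ℝ (Fin d) → ℝ)
    (hAssumptionA : ∀ R : ℝ, 0 < R → ∃ lam Lam : ℝ, 0 < lam ∧ lam ≤ Lam ∧
      ∀ x ∈ X ∩ ball (0 : EuclideanSpace ℝ (Fin d)) R, lam ≤ p x ∧ p x ≤ Lam)
    (a : ℝ) (ha : a = 2 * π ^ ((d : ℝ) / 2) / Gamma ((d : ℝ) / 2))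
    (u : EuclideanSpace ℝ (Fin d) → ℝ≥0∞)
    (hu : ∀ x, u x = if x ∈ ball (0 : EuclideanSpace ℝ (Fin d)) 1 \ {0}
      then ENNReal.ofReal (1 / (a * ‖x‖ ^ (d - 1))) else 0)
    (φ : EuclideanSpace ℝ (Fin d) → ℝ)
    (htransport : ∀ A : Set (EuclideanSpace ℝ (Fin d)), MeasurableSet A →
      ∫⁻ y in ⋃ x ∈ A, {z : EuclideanSpace ℝ (Fin d) | ∀ w, φ x + ⟪z, w - x⟫ ≤ φ w},
        u y = ∫⁻ x in A, ENNReal.ofReal (p x)) :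
    ∀ x ∈ X, ∀ z : EuclideanSpace ℝ (Fin d),
      (∀ w, φ x + ⟪z, w - x⟫ ≤ φ w) → ‖z‖ ≠ 1 := by
  intro x hx z hz hz1
  obtain ⟨r, hr, hrX⟩ := isOpen_iff.1 hXo x hx
  obtain ⟨lam, _, hlam, -, hlamp⟩ := hAssumptionA (‖x‖ + r) (by positivity)
  have ha0 : 0 < a := by
    have := Gamma_pos_of_pos (by positivity : (0 : ℝ) < d / 2)
    rw [ha]; positivity
  have hω : 0 < (volume (ball (0 : EuclideanSpace ℝ (Fin d)) 1)).toReal :=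
    ENNReal.toReal_pos (measure_ball_pos _ _ one_pos).ne' measure_ball_lt_top.ne
  refine not_forall_mul_pow_le_mul_pow_succ (n := d) (C := 2 ^ (d - 1) / a * 2 * 4 ^ (d - 1))
    (c := lam * (r / 2) ^ d * (volume (ball (0 : EuclideanSpace ℝ (Fin d)) 1)).toReal)
    (by positivity) fun η hη hη2 ↦ ?_
  have hp : ∀ x' ∈ ball x (2 * (r / 2)), lam ≤ p x' := fun x' hx' ↦ by
    rw [mul_div_cancel₀ r two_ne_zero] at hx'
    exact (hlamp x' ⟨hrX hx', ball_subset_ball' (by rw [dist_zero_right, add_comm]) hx'⟩).1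
  have hu_le : ∀ y, 1 / 2 ≤ ‖y‖ → u y ≤ ENNReal.ofReal (2 ^ (d - 1) / a) := fun y hy ↦ by
    rw [hu]
    split_ifs
    exacts [ENNReal.ofReal_le_ofReal (one_div_mul_pow_le ha0 hy _), zero_le]
  have hmass := mul_volume_ball_le_of_mem_subdifferential hz hz1 (half_pos hr) hη hη2 hlam.le
    (by positivity) hp hu_le
    (fun y hy ↦ by rw [hu, if_neg fun h ↦ hy (ball_subset_closedBall h.1)]) htransport
  obtain ⟨n, rfl⟩ := Nat.exists_eq_add_of_le' hd
  simp only [finrank_euclideanSpace_fin, Nat.add_sub_cancel] at hmass ⊢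
  convert hmass using 1 <;> ring

/-- No interior point of the convex support of a probability `P` (with density bounded
and bounded away from `0` on compacts) can have, under the optimal transport potential
`φ` pushing `P` to the spherical uniform `U_d`, a subgradient on the unit sphere:
`∂φ(X) ∩ S^{d-1} = ∅`. -/
theorem subgradient_interior_not_on_sphere (d : ℕ) (hd : 1 ≤ d)
    (X : Set (EuclideanSpace ℝ (Fin d))) (hXo : IsOpen X) (hXconv : Convex ℝ X)
    (p : EuclideanSpace ℝ (Fin d) → ℝ)
    (hp0 : ∀ x ∉ X, p x = 0)
    (hprob : ∫⁻ x, ENNReal.ofReal (p x) = 1)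
    (hAssumptionA : ∀ R : ℝ, 0 < R → ∃ lam Lam : ℝ, 0 < lam ∧ lam ≤ Lam ∧
      ∀ x ∈ X ∩ ball (0 : EuclideanSpace ℝ (Fin d)) R, lam ≤ p x ∧ p x ≤ Lam)
    (a : ℝ) (ha : a = 2 * π ^ ((d : ℝ) / 2) / Gamma ((d : ℝ) / 2))
    (u : EuclideanSpace ℝ (Fin d) → ℝ≥0∞)
    (hu : ∀ x, u x = if x ∈ ball (0 : EuclideanSpace ℝ (Fin d)) 1 \ {0}
      then ENNReal.ofReal (1 / (a * ‖x‖ ^ (d - 1))) else 0)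
    (φ : EuclideanSpace ℝ (Fin d) → ℝ) (hφ : ConvexOn ℝ Set.univ φ)
    (htransport : ∀ A : Set (EuclideanSpace ℝ (Fin d)), MeasurableSet A →
      ∫⁻ y in ⋃ x ∈ A, {z : EuclideanSpace ℝ (Fin d) | ∀ w, φ x + ⟪z, w - x⟫ ≤ φ w},
        u y = ∫⁻ x in A, ENNReal.ofReal (p x)) :
    ∀ x ∈ X, ∀ z : EuclideanSpace ℝ (Fin d),
      (∀ w, φ x + ⟪z, w - x⟫ ≤ φ w) → ‖z‖ ≠ 1 :=
  subgradient_interior_not_on_sphere_general d hd X hXo p hAssumptionA a ha u hu φ htransport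
end

section
/- Let φ : R^d → R be a convex function whose subdifferential ∂φ pushes a probability measure P with everywhere positive density forward to the spherical uniform U_d, in the sense that ∂φ(R^d) ⊇ ∇φ(R^d) covers U_d-almost all of B_d. Let u ∈ S^{d-1}, let t_n → ∞, and let y_n ∈ ∂φ(t_n u). Then y_n → u. -/
open Metric MeasureTheory Filter Topology
open RealInnerProductSpace

/-!
Subgradients of a 1-Lipschitz function lie in the closed unit ball, and the hypothesis on the
image of `∂φ` makes that image dense in it, so it contains subgradients `z ∈ ∂φ(x)` with `⟪z, u⟫`
arbitrarily close to `1`. Monotonicity of `∂φ` between `x` and `t u` gives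
`t ⟪y - z, u⟫ ≥ ⟪y - z, x⟫ ≥ -2‖x‖` for `y ∈ ∂φ(t u)`, hence `liminf ⟪y_n, u⟫ ≥ 1`.
A vector of norm at most `1` with `⟪y, u⟫` close to `1` is close to `u`.
-/

theorem subset_closure_of_measure_diff_eq_zero {X : Type*} [TopologicalSpace X]
    [MeasurableSpace X] (μ : Measure X) [μ.IsOpenPosMeasure] {s t : Set X} (hs : IsOpen s)
    (h : μ (s \ t) = 0) : s ⊆ closure t := by
  have hopen : IsOpen (s \ closure t) := hs.sdiff isClosed_closure
  have hnull : μ (s \ closure t) = 0 :=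
    measure_mono_null (Set.sdiff_subset_sdiff_right subset_closure) h
  exact Set.sdiff_eq_empty.mp (hopen.eq_empty_of_measure_zero hnull)

section InnerProductSpace

variable {E : Type*} [NormedAddCommGroup E] [InnerProductSpace ℝ E]

def HasSubgradientAt (φ : E → ℝ) (y x : E) : Prop :=
  ∀ w, φ x + ⟪y, w - x⟫ ≤ φ w

namespace HasSubgradientAt

variable {φ : E → ℝ} {x y : E}

theorem norm_le {K : NNReal} (hlip : LipschitzWith K φ) (h : HasSubgradientAt φ y x) :
    ‖y‖ ≤ K := by
  have hsub : ‖y‖ ^ 2 ≤ K * ‖y‖ := by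
    have hstep := h (x + y)
    rw [add_sub_cancel_left, real_inner_self_eq_norm_sq] at hstep
    have hlip_step : φ (x + y) - φ x ≤ K * ‖y‖ := by
      simpa [dist_eq_norm] using (le_abs_self _).trans (hlip.dist_le_mul (x + y) x)
    linarith
  nlinarith [norm_nonneg y, K.coe_nonneg]

theorem inner_sub_nonneg {x' y' : E} (h : HasSubgradientAt φ y x)
    (h' : HasSubgradientAt φ y' x') : 0 ≤ ⟪y - y', x - x'⟫ := by
  have h₁ := h x'
  have h₂ := h' x
  rw [← neg_sub x x', inner_neg_right] at h₁
  rw [inner_sub_left]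
  linarith

theorem mul_inner_sub_le {t : ℝ} {u z : E} (h : HasSubgradientAt φ y (t • u))
    (hz : HasSubgradientAt φ z x) : t * ⟪z - y, u⟫ ≤ ‖y - z‖ * ‖x‖ := by
  have hmono : 0 ≤ ⟪y - z, t • u - x⟫ := h.inner_sub_nonneg hz
  have hcs : -(‖y - z‖ * ‖x‖) ≤ ⟪y - z, x⟫ := neg_le_of_abs_le (abs_real_inner_le_norm _ _)
  rw [inner_sub_right, real_inner_smul_right] at hmono
  rw [← neg_sub y z, inner_neg_left, mul_neg]
  linarith

end HasSubgradientAt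

theorem eventually_lt_inner_of_hasSubgradientAt_ray {ι : Type*} {l : Filter ι} {φ : E → ℝ}
    {K : NNReal} (hlip : LipschitzWith K φ) {u : E} {t : ι → ℝ} (ht : Tendsto t l atTop)
    {y : ι → E} (hy : ∀ n, HasSubgradientAt φ (y n) (t n • u)) {x z : E}
    (hz : HasSubgradientAt φ z x) {c : ℝ} (hc : c < ⟪z, u⟫) :
    ∀ᶠ n in l, c < ⟪y n, u⟫ := by
  have hbound : ∀ᶠ n in l, ⟪z, u⟫ - 2 * K * ‖x‖ / t n ≤ ⟪y n, u⟫ := by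
    filter_upwards [ht.eventually_gt_atTop 0] with n htn
    have hyz : ‖y n - z‖ ≤ 2 * K := by
      linarith [norm_sub_le (y n) z, (hy n).norm_le hlip, hz.norm_le hlip]
    have hkey := (hy n).mul_inner_sub_le hz
    rw [inner_sub_left] at hkey
    rw [sub_le_comm, le_div_iff₀ htn]
    linarith [mul_le_mul_of_nonneg_right hyz (norm_nonneg x)]
  have hlim : Tendsto (fun n => ⟪z, u⟫ - 2 * K * ‖x‖ / t n) l (𝓝 ⟪z, u⟫) := by
    simpa using tendsto_const_nhds.sub (tendsto_const_nhds.div_atTop ht)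
  filter_upwards [hlim.eventually (lt_mem_nhds hc), hbound] with n hlt hle
  exact hlt.trans_le hle

theorem tendsto_of_forall_lt_inner {ι : Type*} {l : Filter ι} {y : ι → E} {u : E}
    (hnorm : ∀ᶠ n in l, ‖y n‖ ≤ ‖u‖) (hinner : ∀ c < ‖u‖ ^ 2, ∀ᶠ n in l, c < ⟪y n, u⟫) :
    Tendsto y l (𝓝 u) := by
  rw [Metric.tendsto_nhds]
  intro ε hε
  filter_upwards [hnorm, hinner (‖u‖ ^ 2 - ε ^ 2 / 2) (by linarith [pow_pos hε 2])]
    with n hn hlt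
  have hsq : ‖y n - u‖ ^ 2 < ε ^ 2 := by
    rw [norm_sub_sq_real]
    nlinarith [norm_nonneg (y n)]
  rw [dist_eq_norm]
  exact lt_of_pow_lt_pow_left₀ 2 hε.le hsq

end InnerProductSpace

theorem subgradients_along_ray_tendsto_general (d : ℕ)
    (φ : EuclideanSpace ℝ (Fin d) → ℝ)
    (hlip : LipschitzWith 1 φ)
    (hcover : volume (ball (0 : EuclideanSpace ℝ (Fin d)) 1 \
      ⋃ x : EuclideanSpace ℝ (Fin d),
        {z : EuclideanSpace ℝ (Fin d) | ∀ w, φ x + ⟪z, w - x⟫ ≤ φ w}) = 0)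
    (u : EuclideanSpace ℝ (Fin d)) (hu : ‖u‖ = 1)
    (t : ℕ → ℝ) (ht : Filter.Tendsto t Filter.atTop Filter.atTop)
    (y : ℕ → EuclideanSpace ℝ (Fin d))
    (hy : ∀ n, ∀ w, φ (t n • u) + ⟪y n, w - t n • u⟫ ≤ φ w) :
    Filter.Tendsto y Filter.atTop (nhds u) := by
  have hdense : u ∈ closure (⋃ x, {z | HasSubgradientAt φ z x}) := by
    have hball := subset_closure_of_measure_diff_eq_zero volume isOpen_ball hcover
    have hu_mem : u ∈ closure (ball 0 1) := by
      rw [closure_ball _ one_ne_zero, mem_closedBall_zero_iff, hu]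
    exact closure_minimal hball isClosed_closure hu_mem
  refine tendsto_of_forall_lt_inner (.of_forall fun n => ?_) fun c hc => ?_
  · simpa [hu] using HasSubgradientAt.norm_le hlip (hy n)
  · have hnhds : {z | c < ⟪z, u⟫} ∈ 𝓝 u :=
      (isOpen_lt continuous_const (by fun_prop)).mem_nhds
        (by rwa [Set.mem_ofPred_eq, real_inner_self_eq_norm_sq])
    obtain ⟨z, hcz, hz⟩ := mem_closure_iff_nhds.mp hdense _ hnhds
    obtain ⟨x, hzx⟩ := Set.mem_iUnion.mp hz
    exact eventually_lt_inner_of_hasSubgradientAt_ray hlip ht hy hzx hcz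

/-- Asymptotic invariance: if `φ : ℝ^d → ℝ` is convex and 1-Lipschitz and its
subdifferential image `∂φ(ℝ^d)` covers almost all of the unit ball, then for any unit
vector `u`, any `t_n → ∞` and any subgradients `y_n ∈ ∂φ(t_n u)`, one has `y_n → u`. -/
theorem subgradients_along_ray_tendsto (d : ℕ)
    (φ : EuclideanSpace ℝ (Fin d) → ℝ)
    (hconv : ConvexOn ℝ Set.univ φ) (hlip : LipschitzWith 1 φ)
    (hcover : volume (ball (0 : EuclideanSpace ℝ (Fin d)) 1 \
      ⋃ x : EuclideanSpace ℝ (Fin d),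
        {z : EuclideanSpace ℝ (Fin d) | ∀ w, φ x + ⟪z, w - x⟫ ≤ φ w}) = 0)
    (u : EuclideanSpace ℝ (Fin d)) (hu : ‖u‖ = 1)
    (t : ℕ → ℝ) (ht : Filter.Tendsto t Filter.atTop Filter.atTop)
    (y : ℕ → EuclideanSpace ℝ (Fin d))
    (hy : ∀ n, ∀ w, φ (t n • u) + ⟪y n, w - t n • u⟫ ≤ φ w) :
    Filter.Tendsto y Filter.atTop (nhds u) :=
  subgradients_along_ray_tendsto_general d φ hlip hcover u hu t ht y hy
end

section
/- Let Q : B_d → R^d be a monotone map (⟨u − v, Q(u) − Q(v)⟩ ≥ 0 for all u, v ∈ B_d) which is a homeomorphism onto its image. Then for every r ∈ (0,1) and every boundary point y of Q(rB_d), there exists a ray T emanating from y such that the closure of Q(rB_d) intersects T only at y. -/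
/-!
Write `S = Q '' ball 0 r`. Monotonicity replaces invariance of domain: for `w ∉ S`, a solution
`z` of the variational inequality `⟪Q z - w, v - z⟫ ≥ 0` on the closed ball `r` (which exists
without any fixed-point theorem, by Minty's trick and Sion's minimax theorem on simplices) lies
on the sphere and satisfies `r ‖w - Q z‖ ≤ ⟪w - Q z, z⟫`. This inequality is closed in `w`, and
together with monotonicity and injectivity it rules out `w → Q x` with `‖x‖ < r`; hence `S` is
open. A frontier point of `S` is therefore `Q x` with `‖x‖ = r`, and monotonicity against `x`
shows that the ray from `Q x` in direction `x` meets `Q '' closedBall 0 r ⊇ closure S` only at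
its origin.
-/

open Metric Set Matrix Filter Topology
open RealInnerProductSpace

theorem Matrix.exists_mem_stdSimplex_nonneg_mulVec {ι : Type*} [Fintype ι] [Nonempty ι]
    (B : Matrix ι ι ℝ) (hB : ∀ μ ∈ stdSimplex ℝ ι, 0 ≤ μ ⬝ᵥ B *ᵥ μ) :
    ∃ lam ∈ stdSimplex ℝ ι, 0 ≤ B *ᵥ lam := by
  classical
  have hS : (stdSimplex ℝ ι).Nonempty := ⟨_, single_mem_stdSimplex ℝ (Classical.arbitrary ι)⟩
  have hconv := convex_stdSimplex ℝ ι
  have hcomp := isCompact_stdSimplex ℝ ι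
  obtain ⟨a, ha, lam, hlam, hsaddle⟩ := Sion.exists_isSaddlePointOn'
    (f := fun μ lam : ι → ℝ => μ ⬝ᵥ B *ᵥ lam) hS hcomp
    (fun lam _ => (Continuous.lowerSemicontinuous (by fun_prop)).lowerSemicontinuousOn _)
    (fun lam _ => (((dotProductBilin ℝ ℝ).flip (B *ᵥ lam)).convexOn hconv).quasiconvexOn)
    hconv hcomp
    (fun μ _ => (Continuous.upperSemicontinuous (by fun_prop)).upperSemicontinuousOn _)
    (fun μ _ => (((dotProductBilin ℝ ℝ μ).comp B.mulVecLin).concaveOn hconv).quasiconcaveOn)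
    hconv hS
  -- at the saddle point `(a, lam)`: `0 ≤ a ⬝ᵥ B *ᵥ a ≤ Pi.single i 1 ⬝ᵥ B *ᵥ lam`
  refine ⟨lam, hlam, fun i => ?_⟩
  simpa using (hB a ha).trans (hsaddle _ (single_mem_stdSimplex ℝ i) a ha)

variable {E : Type*} [NormedAddCommGroup E] [InnerProductSpace ℝ E]

def IsMonotoneOperatorOn (F : E → E) (K : Set E) : Prop :=
  ∀ u ∈ K, ∀ v ∈ K, 0 ≤ ⟪u - v, F u - F v⟫

theorem IsMonotoneOperatorOn.mono {F : E → E} {K L : Set E} (hF : IsMonotoneOperatorOn F L)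
    (hKL : K ⊆ L) : IsMonotoneOperatorOn F K :=
  fun u hu v hv => hF u (hKL hu) v (hKL hv)

theorem exists_mem_convexHull_forall_inner_nonneg {ι : Type*} [Fintype ι] [Nonempty ι]
    (p : ι → E) (F : E → E) (hF : IsMonotoneOperatorOn F (range p)) :
    ∃ z ∈ convexHull ℝ (range p), ∀ i, 0 ≤ ⟪F (p i), p i - z⟫ := by
  set B : Matrix ι ι ℝ := fun i j => ⟪F (p i), p i - p j⟫
  have hB_symm : ∀ i j, B i j + B j i = ⟪p i - p j, F (p i) - F (p j)⟫ := by
    intro i j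
    simp only [B, inner_sub_left, inner_sub_right, real_inner_comm]
    ring
  have hB : ∀ μ ∈ stdSimplex ℝ ι, 0 ≤ μ ⬝ᵥ B *ᵥ μ := by
    intro μ hμ
    have hquad : μ ⬝ᵥ B *ᵥ μ = ∑ i, ∑ j, μ i * μ j * B i j := by
      simp only [dotProduct, mulVec, Finset.mul_sum]
      exact Finset.sum_congr rfl fun i _ => Finset.sum_congr rfl fun j _ => by ring
    have hquad' : μ ⬝ᵥ B *ᵥ μ = ∑ i, ∑ j, μ i * μ j * B j i := by
      rw [hquad, Finset.sum_comm]
      exact Finset.sum_congr rfl fun i _ => Finset.sum_congr rfl fun j _ => by ring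
    have : 0 ≤ ∑ i, ∑ j, μ i * μ j * (B i j + B j i) :=
      Finset.sum_nonneg fun i _ => Finset.sum_nonneg fun j _ =>
        mul_nonneg (mul_nonneg (hμ.1 i) (hμ.1 j)) ((hB_symm i j).symm ▸ hF _ ⟨i, rfl⟩ _ ⟨j, rfl⟩)
    simp only [mul_add, Finset.sum_add_distrib, ← hquad, ← hquad'] at this
    linarith
  obtain ⟨lam, hlam, hBlam⟩ := B.exists_mem_stdSimplex_nonneg_mulVec hB
  refine ⟨∑ j, lam j • p j, mem_convexHull_of_exists_fintype lam p hlam.1 hlam.2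
    mem_range_self rfl, fun i => ?_⟩
  have : p i - ∑ j, lam j • p j = ∑ j, lam j • (p i - p j) := by
    simp only [smul_sub, Finset.sum_sub_distrib, ← Finset.sum_smul, hlam.2, one_smul]
  calc 0 ≤ (B *ᵥ lam) i := hBlam i
    _ = ⟪F (p i), p i - ∑ j, lam j • p j⟫ := by
      simp only [this, inner_sum, real_inner_smul_right, mulVec, dotProduct, B, mul_comm]

theorem IsCompact.exists_weak_variational_solution {K : Set E} (hK : IsCompact K)
    (hKc : Convex ℝ K) (hne : K.Nonempty) (F : E → E)
    (hF : IsMonotoneOperatorOn F K) :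
    ∃ z ∈ K, ∀ v ∈ K, 0 ≤ ⟪F v, v - z⟫ := by
  have hfin (u : Finset K) : (K ∩ ⋂ v ∈ u, {z | 0 ≤ ⟪F v, v - z⟫}).Nonempty := by
    rcases u.eq_empty_or_nonempty with rfl | hu
    · simpa using hne
    have := hu.to_subtype
    have hu_sub : range (fun i : u => i.1.1) ⊆ K := range_subset_iff.2 fun i => i.1.2
    obtain ⟨z, hz_hull, hz⟩ :=
      exists_mem_convexHull_forall_inner_nonneg (fun i : u => i.1.1) F (hF.mono hu_sub)
    exact ⟨z, hKc.convexHull_subset_iff.2 hu_sub hz_hull,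
      mem_iInter₂.2 fun v hv => hz ⟨v, hv⟩⟩
  obtain ⟨z, hzK, hz⟩ := hK.inter_iInter_nonempty (fun v : K => {z | 0 ≤ ⟪F v, v - z⟫})
    (fun v => isClosed_le continuous_const (by fun_prop)) hfin
  exact ⟨z, hzK, fun v hv => mem_iInter.1 hz ⟨v, hv⟩⟩

theorem Convex.variational_solution_of_weak {K : Set E} (hKc : Convex ℝ K) {F : E → E}
    (hFc : ContinuousOn F K) {z : E} (hzK : z ∈ K) (hz : ∀ v ∈ K, 0 ≤ ⟪F v, v - z⟫) :
    ∀ v ∈ K, 0 ≤ ⟪F z, v - z⟫ := by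
  intro v hv
  have hseg : ∀ t ∈ Ioo (0 : ℝ) 1, z + t • (v - z) ∈ K := fun t ht =>
    hKc.add_smul_sub_mem hzK hv (Ioo_subset_Icc_self ht)
  have hlim : Tendsto (fun t : ℝ => z + t • (v - z)) (𝓝[>] 0) (𝓝[K] z) := by
    refine tendsto_nhdsWithin_iff.2 ⟨?_, eventually_of_mem (Ioo_mem_nhdsGT one_pos) hseg⟩
    exact tendsto_nhdsWithin_of_tendsto_nhds (Continuous.tendsto' (by fun_prop) _ _ (by simp))
  refine ge_of_tendsto (((hFc z hzK).tendsto.comp hlim).inner tendsto_const_nhds)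
    (eventually_of_mem (Ioo_mem_nhdsGT one_pos) fun t ht => ?_)
  have := hz _ (hseg t ht)
  rw [add_sub_cancel_left, real_inner_smul_right] at this
  exact nonneg_of_mul_nonneg_right this ht.1

theorem IsCompact.exists_variational_solution {K : Set E} (hK : IsCompact K)
    (hKc : Convex ℝ K) (hne : K.Nonempty) {F : E → E} (hFc : ContinuousOn F K)
    (hF : IsMonotoneOperatorOn F K) :
    ∃ z ∈ K, ∀ v ∈ K, 0 ≤ ⟪F z, v - z⟫ :=
  let ⟨z, hzK, hz⟩ := hK.exists_weak_variational_solution hKc hne F hF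
  ⟨z, hzK, hKc.variational_solution_of_weak hFc hzK hz⟩

theorem inner_le_neg_mul_norm_of_forall_inner_le {a z : E} {r : ℝ} (hr : 0 ≤ r)
    (h : ∀ v ∈ closedBall (0 : E) r, ⟪a, z⟫ ≤ ⟪a, v⟫) : ⟪a, z⟫ ≤ -(r * ‖a‖) := by
  rcases eq_or_ne a 0 with rfl | ha
  · simp
  have ha' : 0 < ‖a‖ := norm_pos_iff.2 ha
  have hv : -(r / ‖a‖) • a ∈ closedBall (0 : E) r := by
    rw [mem_closedBall_zero_iff, norm_smul, norm_neg, Real.norm_of_nonneg (by positivity),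
      div_mul_cancel₀ _ ha'.ne']
  calc ⟪a, z⟫ ≤ ⟪a, -(r / ‖a‖) • a⟫ := h _ hv
    _ = -(r * ‖a‖) := by
      rw [real_inner_smul_right, real_inner_self_eq_norm_sq]
      field_simp

section Ball

variable [FiniteDimensional ℝ E] {Q : E → E} {r : ℝ}

theorem exists_mem_sphere_mul_norm_le_inner (hr : 0 ≤ r) (hQc : ContinuousOn Q (closedBall 0 r))
    (hQ : IsMonotoneOperatorOn Q (closedBall 0 r))
    {w : E} (hw : w ∉ Q '' ball 0 r) :
    ∃ z ∈ sphere (0 : E) r, r * ‖w - Q z‖ ≤ ⟪w - Q z, z⟫ := by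
  obtain ⟨z, hzK, hz⟩ := (isCompact_closedBall (0 : E) r).exists_variational_solution
    (convex_closedBall 0 r) (nonempty_closedBall.2 hr) (F := fun v => Q v - w)
    (hQc.sub continuousOn_const)
    fun u hu v hv => by simpa using hQ u hu v hv
  have hineq : r * ‖w - Q z‖ ≤ ⟪w - Q z, z⟫ := by
    have := inner_le_neg_mul_norm_of_forall_inner_le hr (a := Q z - w) (z := z) fun v hv => by
      have := hz v hv
      rw [inner_sub_right] at this
      linarith
    rw [← neg_sub, norm_neg, inner_neg_left] at this
    linarith
  -- an interior solution of the variational inequality would be a preimage of `w`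
  refine ⟨z, mem_sphere_zero_iff_norm.2 <| le_antisymm (mem_closedBall_zero_iff.1 hzK) <|
    not_lt.1 fun hlt => hw ⟨z, mem_ball_zero_iff.2 hlt, ?_⟩, hineq⟩
  have : ‖w - Q z‖ * (r - ‖z‖) ≤ 0 := by
    nlinarith [hineq.trans (real_inner_le_norm (w - Q z) z)]
  have : ‖w - Q z‖ = 0 := by nlinarith [norm_nonneg (w - Q z)]
  rw [eq_comm, ← sub_eq_zero, ← norm_eq_zero, this]

theorem exists_mem_sphere_mul_norm_le_inner_of_mem_closure (hr : 0 ≤ r)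
    (hQc : ContinuousOn Q (closedBall 0 r))
    (hQ : IsMonotoneOperatorOn Q (closedBall 0 r))
    {y : E} (hy : y ∈ closure (Q '' ball 0 r)ᶜ) :
    ∃ z ∈ sphere (0 : E) r, r * ‖y - Q z‖ ≤ ⟪y - Q z, z⟫ := by
  have : CompactSpace (sphere (0 : E) r) := isCompact_iff_compactSpace.1 (isCompact_sphere 0 r)
  have hQs : Continuous fun p : sphere (0 : E) r × E => Q p.1 :=
    (hQc.comp_continuous continuous_subtype_val fun z => sphere_subset_closedBall z.2).comp
      continuous_fst
  have hclosed : IsClosed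
      (Prod.snd '' {p : sphere (0 : E) r × E | r * ‖p.2 - Q p.1‖ ≤ ⟪p.2 - Q p.1, p.1⟫}) :=
    isClosedMap_snd_of_compactSpace _ <| isClosed_le
      (continuous_const.mul (continuous_snd.sub hQs).norm)
      ((continuous_snd.sub hQs).inner (continuous_subtype_val.comp continuous_fst))
  have hcompl : (Q '' ball 0 r)ᶜ ⊆
      Prod.snd '' {p : sphere (0 : E) r × E | r * ‖p.2 - Q p.1‖ ≤ ⟪p.2 - Q p.1, p.1⟫} := by
    intro w hw
    obtain ⟨z, hz, hineq⟩ := exists_mem_sphere_mul_norm_le_inner hr hQc hQ hw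
    exact ⟨⟨⟨z, hz⟩, w⟩, hineq, rfl⟩
  obtain ⟨⟨z, y'⟩, hz, rfl⟩ := closure_minimal hcompl hclosed hy
  exact ⟨z, z.2, hz⟩

theorem isOpen_image_ball_of_monotoneOn (hQc : ContinuousOn Q (closedBall 0 r))
    (hQi : InjOn Q (closedBall 0 r))
    (hQ : IsMonotoneOperatorOn Q (closedBall 0 r)) :
    IsOpen (Q '' ball 0 r) := by
  refine interior_eq_iff_isOpen.1 (interior_subset.antisymm ?_)
  rintro _ ⟨x, hx, rfl⟩
  by_contra hint
  rw [← mem_compl_iff, ← closure_compl] at hint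
  have hxr := mem_ball_zero_iff.1 hx
  obtain ⟨z, hz, hineq⟩ :=
    exists_mem_sphere_mul_norm_le_inner_of_mem_closure ((norm_nonneg x).trans hxr.le) hQc hQ hint
  have hzK := sphere_subset_closedBall hz
  rw [mem_sphere_zero_iff_norm] at hz
  have hmono := hQ z hzK x (ball_subset_closedBall hx)
  have : r * ‖Q x - Q z‖ ≤ ‖Q x - Q z‖ * ‖x‖ := calc
    r * ‖Q x - Q z‖ ≤ ⟪Q x - Q z, z⟫ := hineq
    _ ≤ ⟪Q x - Q z, x⟫ := by
      rw [← neg_sub (Q x), inner_neg_right, inner_sub_left] at hmono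
      linarith [real_inner_comm z (Q x - Q z), real_inner_comm x (Q x - Q z)]
    _ ≤ ‖Q x - Q z‖ * ‖x‖ := real_inner_le_norm _ _
  have : ‖Q x - Q z‖ = 0 := by nlinarith [norm_nonneg (Q x - Q z)]
  have hxz : x = z := hQi (ball_subset_closedBall hx) hzK (sub_eq_zero.1 (norm_eq_zero.1 this))
  exact hxr.ne (hxz ▸ hz)

end Ball

theorem apply_ne_apply_add_smul_of_inner_sub_nonneg {Q : E → E} {x v : E} (hx : x ≠ 0)
    (hv : ‖v‖ ≤ ‖x‖) {t : ℝ} (ht : 0 < t) (hmono : 0 ≤ ⟪x - v, Q x - Q v⟫) :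
    Q v ≠ Q x + t • x := by
  intro h
  rw [h, sub_add_cancel_left, inner_neg_right, real_inner_smul_right] at hmono
  have hxv : ⟪x - v, x⟫ ≤ 0 := nonpos_of_mul_nonpos_right (by linarith) ht
  have : ‖x - v‖ ^ 2 ≤ 0 := by
    rw [inner_sub_left, real_inner_self_eq_norm_sq] at hxv
    rw [norm_sub_sq_real, real_inner_comm]
    nlinarith [norm_nonneg v]
  have : x = v := sub_eq_zero.1 (norm_eq_zero.1 (by nlinarith [norm_nonneg (x - v)]))
  subst this
  exact smul_ne_zero ht.ne' hx (by simpa using h)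

/-- Lighthouse-convexity of quantile regions: if `Q` is a monotone map on the open unit
ball which is a homeomorphism onto its image, then from every boundary point `y` of
`Q(rB_d)` (`0 < r < 1`) there is a ray emanating from `y` meeting the closure of
`Q(rB_d)` only at `y`. -/
theorem quantile_region_lighthouse (d : ℕ)
    (Q : EuclideanSpace ℝ (Fin d) → EuclideanSpace ℝ (Fin d))
    (hmono : ∀ u v, u ∈ ball (0 : EuclideanSpace ℝ (Fin d)) 1 →
      v ∈ ball (0 : EuclideanSpace ℝ (Fin d)) 1 → ⟪u - v, Q u - Q v⟫ ≥ 0)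
    (hemb : Topology.IsEmbedding ((ball (0 : EuclideanSpace ℝ (Fin d)) 1).restrict Q))
    (r : ℝ) (hr : r ∈ Set.Ioo (0 : ℝ) 1)
    (y : EuclideanSpace ℝ (Fin d))
    (hy : y ∈ frontier (Q '' ball (0 : EuclideanSpace ℝ (Fin d)) r)) :
    ∃ s : EuclideanSpace ℝ (Fin d), s ≠ 0 ∧
      ∀ t : ℝ, 0 < t → y + t • s ∉ closure (Q '' ball (0 : EuclideanSpace ℝ (Fin d)) r) := by
  obtain ⟨hr0, hr1⟩ := hr
  have hsub : closedBall (0 : EuclideanSpace ℝ (Fin d)) r ⊆ ball 0 1 := closedBall_subset_ball hr1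
  have hQc : ContinuousOn Q (closedBall 0 r) :=
    (continuousOn_iff_continuous_domRestrict.2 hemb.continuous).mono hsub
  have hQi : InjOn Q (closedBall 0 r) := (injOn_iff_injective.2 hemb.injective).mono hsub
  have hQm : IsMonotoneOperatorOn Q (closedBall 0 r) :=
    IsMonotoneOperatorOn.mono (fun u hu v hv => hmono u v hu hv) hsub
  have hclosure : closure (Q '' ball 0 r) ⊆ Q '' closedBall 0 r :=
    closure_minimal (image_mono ball_subset_closedBall)
      ((isCompact_closedBall 0 r).image_of_continuousOn hQc).isClosed
  obtain ⟨x, hxK, rfl⟩ := hclosure (frontier_subset_closure hy)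
  rw [(isOpen_image_ball_of_monotoneOn hQc hQi hQm).frontier_eq] at hy
  have hx : ‖x‖ = r := le_antisymm (mem_closedBall_zero_iff.1 hxK)
    (not_lt.1 fun h => hy.2 ⟨x, mem_ball_zero_iff.2 h, rfl⟩)
  have hx0 : x ≠ 0 := norm_ne_zero_iff.1 (hx ▸ hr0.ne')
  refine ⟨x, hx0, fun t ht hmem => ?_⟩
  obtain ⟨v, hv, hQv⟩ := hclosure hmem
  exact apply_ne_apply_add_smul_of_inner_sub_nonneg hx0 (hx ▸ mem_closedBall_zero_iff.1 hv) ht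
    (hQm x hxK v hv) hQv
end

section
/- Let ψ be a convex function on the open unit ball B_d such that ∇ψ♯U_d = P where P has a Lebesgue density and convex support X. Then ∂ψ(B_d) is contained in the closure of X. -/
open Metric MeasureTheory Real Classical
open RealInnerProductSpace

/-- At a differentiability point of a convex function, the gradient is a subgradient. -/
theorem grad_is_subgrad {E : Type*} [NormedAddCommGroup E] [InnerProductSpace ℝ E] [CompleteSpace E]
    {s : Set E} {ψ : E → ℝ} (hψ : ConvexOn ℝ s ψ) {w x : E} (hw : w ∈ s) (hx : x ∈ s)
    (hdiff : DifferentiableAt ℝ ψ w) :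
    ψ w + ⟪gradient ψ w, x - w⟫ ≤ ψ x := by
  have hfd : HasFDerivAt ψ (fderiv ℝ ψ w) w := hdiff.hasFDerivAt
  have hinner : ⟪gradient ψ w, x - w⟫ = fderiv ℝ ψ w (x - w) := by
    rw [gradient, InnerProductSpace.toDual_symm_apply]
  have hline : HasDerivAt (fun t : ℝ => w + t • (x - w)) (x - w) 0 := by
    simpa using ((hasDerivAt_id (0:ℝ)).smul_const (x - w)).const_add w
  have hfd' : HasFDerivAt ψ (fderiv ℝ ψ w) ((fun t : ℝ => w + t • (x - w)) 0) := by
    simpa using hfd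
  have hcomp : HasDerivAt (fun t : ℝ => ψ (w + t • (x - w))) (fderiv ℝ ψ w (x - w)) 0 :=
    hfd'.comp_hasDerivAt 0 hline
  have hslope := hasDerivAt_iff_tendsto_slope.1 hcomp
  have hslope' : Filter.Tendsto (slope (fun t : ℝ => ψ (w + t • (x - w))) 0)
      (nhdsWithin (0:ℝ) (Set.Ioi 0)) (nhds (fderiv ℝ ψ w (x - w))) :=
    hslope.mono_left (nhdsWithin_mono _ fun t ht => ne_of_gt ht)
  have hkey : fderiv ℝ ψ w (x - w) ≤ ψ x - ψ w := by
    refine le_of_tendsto hslope' ?_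
    filter_upwards [Ioo_mem_nhdsGT_of_mem (Set.mem_Ico.2 ⟨le_refl (0:ℝ), zero_lt_one⟩)]
      with t ht
    have ht0 : (0:ℝ) < t := ht.1
    have ht1 : t ≤ 1 := le_of_lt ht.2
    have hconv := hψ.2 hw hx (by linarith : (0:ℝ) ≤ 1 - t) (le_of_lt ht0) (by ring)
    have heq : (1 - t) • w + t • x = w + t • (x - w) := by module
    rw [heq] at hconv
    simp only [smul_eq_mul] at hconv
    have hsl : slope (fun t : ℝ => ψ (w + t • (x - w))) 0 t
        = (ψ (w + t • (x - w)) - ψ w) / t := by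
      rw [slope_def_field]; simp
    rw [hsl, div_le_iff₀ ht0]
    nlinarith
  rw [hinner]
  linarith
open scoped ENNReal

/-- If `∇ψ` pushes the spherical uniform `U_d` forward to a measure with a Lebesgue
density supported on a convex set `X`, then `∂ψ(B_d) ⊆ closure X`. -/
theorem subdifferential_image_subset_closure_support (d : ℕ) (hd : 1 ≤ d)
    (X : Set (EuclideanSpace ℝ (Fin d))) (hXconv : Convex ℝ X)
    (p : EuclideanSpace ℝ (Fin d) → ℝ≥0∞)
    (hp0 : ∀ x ∉ X, p x = 0)
    (a : ℝ) (ha : a = 2 * π ^ ((d : ℝ) / 2) / Gamma ((d : ℝ) / 2))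
    (u : EuclideanSpace ℝ (Fin d) → ℝ≥0∞)
    (hu : ∀ x, u x = if x ∈ ball (0 : EuclideanSpace ℝ (Fin d)) 1 \ {0}
      then ENNReal.ofReal (1 / (a * ‖x‖ ^ (d - 1))) else 0)
    (ψ : EuclideanSpace ℝ (Fin d) → ℝ)
    (hψ : ConvexOn ℝ (ball (0 : EuclideanSpace ℝ (Fin d)) 1) ψ)
    (hpush : Measure.map (gradient ψ) (volume.withDensity u) = volume.withDensity p) :
    ∀ y ∈ ball (0 : EuclideanSpace ℝ (Fin d)) 1,
      ∀ z : EuclideanSpace ℝ (Fin d),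
        (∀ w ∈ ball (0 : EuclideanSpace ℝ (Fin d)) 1, ψ y + ⟪z, w - y⟫ ≤ ψ w) →
        z ∈ closure X := by
  intro y hy z hsub
  by_contra hz
  -- separating hyperplane
  obtain ⟨f, c, hfc, hcz⟩ :=
    geometric_hahn_banach_closed_point hXconv.closure isClosed_closure hz
  set v := (InnerProductSpace.toDual ℝ (EuclideanSpace ℝ (Fin d))).symm f with hv
  have hfv : ∀ x, f x = ⟪v, x⟫ := fun x =>
    (InnerProductSpace.toDual_symm_apply).symm
  -- positivity of a
  have ha' : (0:ℝ) < a := by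
    rw [ha]
    have hdpos : (0:ℝ) < d := by exact_mod_cast hd
    have hΓ : 0 < Gamma ((d : ℝ) / 2) :=
      Real.Gamma_pos_of_pos (by linarith)
    exact div_pos (by positivity) hΓ
  -- measurability of gradient
  have hgradm : Measurable (gradient ψ) := by
    have : gradient ψ = fun x =>
        (InnerProductSpace.toDual ℝ (EuclideanSpace ℝ (Fin d))).symm (fderiv ℝ ψ x) := rfl
    rw [this]
    exact (InnerProductSpace.toDual ℝ (EuclideanSpace ℝ (Fin d))).symm.continuous.measurable.comp
      (measurable_fderiv ℝ ψ)
  -- measurability of u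
  have hum : Measurable u := by
    have hueq : u = Set.indicator (ball (0 : EuclideanSpace ℝ (Fin d)) 1 \ {0})
        (fun x => ENNReal.ofReal (1 / (a * ‖x‖ ^ (d - 1)))) := by
      funext x; rw [hu x, Set.indicator_apply]
    rw [hueq]
    exact (Measurable.ennreal_ofReal (measurable_const.div
      (measurable_const.mul (measurable_norm.pow_const _)))).indicator
      (measurableSet_ball.diff (measurableSet_singleton 0))
  -- the pushforward vanishes outside closure X
  have hXm : MeasurableSet ((closure X)ᶜ) := isClosed_closure.measurableSet.compl
  have hpre : volume.withDensity u ((gradient ψ) ⁻¹' (closure X)ᶜ) = 0 := by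
    rw [← Measure.map_apply hgradm hXm, hpush, withDensity_apply _ hXm]
    have hz0 : ∀ᵐ x ∂(volume.restrict ((closure X)ᶜ)), p x = 0 := by
      refine ae_restrict_of_forall_mem hXm fun x hx => hp0 x fun hxX => hx (subset_closure hxX)
    rw [lintegral_congr_ae hz0, lintegral_zero]
  have hnull : volume ({x | u x ≠ 0} ∩ (gradient ψ) ⁻¹' (closure X)ᶜ) = 0 :=
    (withDensity_apply_eq_zero hum).1 hpre
  -- on ball \ {0}, u ≠ 0
  have husub : ball (0 : EuclideanSpace ℝ (Fin d)) 1 \ {0} ⊆ {x | u x ≠ 0} := by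
    intro x hx
    have hx0 : x ≠ 0 := hx.2
    have hnx : (0:ℝ) < ‖x‖ := norm_pos_iff.2 hx0
    have : (0:ℝ) < 1 / (a * ‖x‖ ^ (d - 1)) := by positivity
    simp only [Set.mem_setOf_eq, hu x, if_pos hx, ne_eq, ENNReal.ofReal_eq_zero, not_le]
    exact this
  -- choose t > 0 with y + t • v in the ball
  have hcont : ContinuousAt (fun t : ℝ => y + t • v) 0 := by fun_prop
  have hmem : (fun t : ℝ => y + t • v) ⁻¹' (ball 0 1) ∈ nhds (0:ℝ) := by
    apply hcont.preimage_mem_nhds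
    simpa using isOpen_ball.mem_nhds hy
  obtain ⟨ε, hε0, hεsub⟩ := Metric.mem_nhds_iff.1 hmem
  set t := ε / 2 with htdef
  have ht0 : (0:ℝ) < t := by positivity
  have hwt : y + t • v ∈ ball (0 : EuclideanSpace ℝ (Fin d)) 1 := by
    apply hεsub
    simp only [Metric.mem_ball, Real.dist_eq, sub_zero]
    rw [abs_of_pos ht0]; linarith
  set wt := y + t • v with hwtdef
  -- local Lipschitz and Rademacher around wt
  have hLL := hψ.locallyLipschitzOn isOpen_ball
  obtain ⟨K, s', hs', hlip⟩ := hLL hwt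
  rw [isOpen_ball.nhdsWithin_eq hwt] at hs'
  have hs'B : s' ∩ ball (0 : EuclideanSpace ℝ (Fin d)) 1 ∈ nhds wt :=
    Filter.inter_mem hs' (isOpen_ball.mem_nhds hwt)
  obtain ⟨η, hη0, hηsub⟩ := Metric.mem_nhds_iff.1 hs'B
  have hfz : c < ⟪v, z⟫ := by rw [← hfv]; exact hcz
  have hD : (0:ℝ) < ‖z‖ + K + 1 := by positivity
  set η2 := min η (t * (⟪v, z⟫ - c) / (‖z‖ + K + 1)) with hη2def
  have hη2pos : 0 < η2 :=
    lt_min hη0 (div_pos (mul_pos ht0 (sub_pos.2 hfz)) hD)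
  have hη2η : ball wt η2 ⊆ ball wt η := ball_subset_ball (min_le_left _ _)
  have hη2b : η2 * (‖z‖ + K + 1) ≤ t * (⟪v, z⟫ - c) :=
    (le_div_iff₀ hD).1 (min_le_right _ _)
  have hae1 : ∀ᵐ x ∂(volume : Measure (EuclideanSpace ℝ (Fin d))),
      x ∈ s' → DifferentiableWithinAt ℝ ψ s' x :=
    hlip.ae_differentiableWithinAt_of_mem
  -- find a good point w
  set Nd := {x : EuclideanSpace ℝ (Fin d) | ¬ (x ∈ s' → DifferentiableWithinAt ℝ ψ s' x)}
    with hNddef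
  have hNd : volume Nd = 0 := by
    rw [hNddef]
    exact (MeasureTheory.ae_iff).1 hae1
  haveI : Nonempty (Fin d) := ⟨⟨0, hd⟩⟩
  haveI : Nontrivial (EuclideanSpace ℝ (Fin d)) := inferInstance
  have hT : (0:ℝ≥0∞) < volume ((ball wt η2 \ {0}) \
      (({x | u x ≠ 0} ∩ (gradient ψ) ⁻¹' (closure X)ᶜ) ∪ Nd)) := by
    rw [measure_diff_null (measure_union_null hnull hNd),
      measure_diff_null (measure_singleton 0)]
    exact measure_ball_pos volume wt hη2pos
  obtain ⟨w, hw⟩ := nonempty_of_measure_ne_zero (ne_of_gt hT)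
  obtain ⟨⟨hwball, hw0⟩, hwbad⟩ := hw
  have hwsB : w ∈ s' ∩ ball (0 : EuclideanSpace ℝ (Fin d)) 1 := hηsub (hη2η hwball)
  -- w is a differentiability point
  have hs'nhds : s' ∈ nhds w :=
    Filter.mem_of_superset ((isOpen_ball).mem_nhds hwball)
      (fun x hx => (hηsub (hη2η hx)).1)
  have hdiffw : DifferentiableAt ℝ ψ w := by
    have h1 : w ∉ Nd := fun h => hwbad (Or.inr h)
    have h2 : DifferentiableWithinAt ℝ ψ s' w := not_not.1 h1 hwsB.1
    exact h2.differentiableAt hs'nhds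
  -- gradient of ψ at w lies in closure X
  have hgX : gradient ψ w ∈ closure X := by
    by_contra hgX
    exact hwbad (Or.inl ⟨husub ⟨hwsB.2, hw0⟩, hgX⟩)
  set g := gradient ψ w with hg
  -- Lipschitz bound on the gradient
  have hKg : ‖g‖ ≤ K := by
    have hfb : ‖fderiv ℝ ψ w‖ ≤ K :=
      norm_fderiv_le_of_lipschitzOn (𝕜 := ℝ) hs'nhds hlip
    have : ‖g‖ = ‖fderiv ℝ ψ w‖ :=
      (InnerProductSpace.toDual ℝ (EuclideanSpace ℝ (Fin d))).symm.norm_map _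
    rw [this]; exact hfb
  -- subgradient inequalities
  have h1 : ψ w + ⟪g, y - w⟫ ≤ ψ y := grad_is_subgrad hψ hwsB.2 hy hdiffw
  have h3 : ψ y + ⟪z, w - y⟫ ≤ ψ w := hsub w hwsB.2
  have hneg : ⟪g, y - w⟫ = -⟪g, w - y⟫ := by rw [← inner_neg_right, neg_sub]
  have hmono : ⟪z, w - y⟫ ≤ ⟪g, w - y⟫ := by
    rw [hneg] at h1; linarith
  -- decompositions
  have hwy : w - y = t • v + (w - wt) := by rw [hwtdef]; abel
  have hdg : ⟪g, w - y⟫ = t * ⟪g, v⟫ + ⟪g, w - wt⟫ := by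
    rw [hwy, inner_add_right, real_inner_smul_right]
  have hdz : ⟪z, w - y⟫ = t * ⟪z, v⟫ + ⟪z, w - wt⟫ := by
    rw [hwy, inner_add_right, real_inner_smul_right]
  have hnw : ‖w - wt‖ < η2 := by
    rw [← dist_eq_norm]; exact mem_ball.1 hwball
  have hB1 : |⟪g, w - wt⟫| ≤ K * η2 := by
    calc |⟪g, w - wt⟫| ≤ ‖g‖ * ‖w - wt‖ := abs_real_inner_le_norm _ _
    _ ≤ K * η2 := mul_le_mul hKg hnw.le (norm_nonneg _) K.coe_nonneg
  have hB2 : |⟪z, w - wt⟫| ≤ ‖z‖ * η2 := by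
    calc |⟪z, w - wt⟫| ≤ ‖z‖ * ‖w - wt‖ := abs_real_inner_le_norm _ _
    _ ≤ ‖z‖ * η2 := mul_le_mul le_rfl hnw.le (norm_nonneg _) (norm_nonneg z)
  have hfg : ⟪v, g⟫ < c := by rw [← hfv]; exact hfc g hgX
  have hc1 : ⟪v, g⟫ = ⟪g, v⟫ := real_inner_comm g v
  have hc2 : ⟪v, z⟫ = ⟪z, v⟫ := real_inner_comm z v
  rw [hc1] at hfg
  rw [hc2] at hfz hη2b
  have hprod : t * ⟪g, v⟫ < t * c := mul_lt_mul_of_pos_left hfg ht0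
  have hexp : η2 * (‖z‖ + K + 1) = ‖z‖ * η2 + K * η2 + η2 := by ring
  have hexp2 : t * (⟪z, v⟫ - c) = t * ⟪z, v⟫ - t * c := by ring
  rw [hexp, hexp2] at hη2b
  linarith [hmono, hdg, hdz, hB1, hB2, hprod, hη2b, hη2pos,
    le_abs_self ⟪g, w - wt⟫, neg_abs_le ⟪z, w - wt⟫]
end

section
/- For θ > 0 small, define A_θ = B_d ∩ {z = (z_1, z') ∈ R × R^{d-1} : −θ|z'| ≤ z_1 − 1 ≤ 0}. Then ℓ_d(A_θ) = O(θ^{d+1}) as θ → 0; moreover A_θ is separated from the origin, so that the density u_d(x) = 1/(a_d|x|^{d-1}) of the spherical uniform is bounded above on A_θ uniformly for small θ, and hence U_d(A_θ) = O(θ^{d+1}). -/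
/-!
Write `z = (t, z')` and `w = ‖z'‖`. Since `t² + w² < 1` in the ball, on the cone
`w² < (1 - t)(1 + t) ≤ 2(1 - t) ≤ 2θw`, whence `w ≤ 2θ` and `1 - t ≤ θw ≤ 2θ²`. Thus `A_θ` lies in
a box with one side `2θ²` and `d - 1` sides `4θ`, of volume `2 · 4^(d-1) θ^(d+1)`. For `θ < 1/2`
the first coordinate, hence `‖z‖`, is at least `1/2` there, which bounds the density by
`2^(d-1)/a_d`.
-/

open Classical

open Metric MeasureTheory Real
open scoped ENNReal

theorem le_two_mul_and_one_sub_two_mul_sq_le_of_sq_add_sq_lt_one {t w θ : ℝ} (hθ : 0 ≤ θ)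
    (hw : 0 ≤ w) (hball : t ^ 2 + w ^ 2 < 1) (hcone : 1 - t ≤ θ * w) :
    w ≤ 2 * θ ∧ 1 - 2 * θ ^ 2 ≤ t := by
  have ht : t < 1 := by nlinarith
  have hw2 : w ≤ 2 * θ := by nlinarith
  exact ⟨hw2, by nlinarith⟩

theorem withDensity_apply_le_mul_of_forall_le {α : Type*} [MeasurableSpace α] {μ : Measure α}
    [SFinite μ] {f : α → ℝ≥0∞} {s : Set α} {c : ℝ≥0∞} (hf : ∀ x ∈ s, f x ≤ c) :
    μ.withDensity f s ≤ c * μ s := by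
  calc μ.withDensity f s = ∫⁻ x in s, f x ∂μ := withDensity_apply' f s
    _ ≤ ∫⁻ _ in s, c ∂μ := setLIntegral_mono measurable_const hf
    _ = c * μ s := setLIntegral_const s c

namespace EuclideanSpace

variable {ι : Type*} [Fintype ι]

theorem norm_sq_eq_sq_apply_add_norm_sub_smul_single [DecidableEq ι] (z : EuclideanSpace ℝ ι)
    (i : ι) :
    ‖z‖ ^ 2 = z i ^ 2 + ‖z - z i • single i 1‖ ^ 2 := by
  have horth : inner ℝ (z i • single i (1 : ℝ)) (z - z i • single i 1) = 0 := by
    simp [real_inner_smul_left, inner_sub_right, EuclideanSpace.inner_single_left, norm_smul,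
      sq]
  calc ‖z‖ ^ 2 = ‖z i • single i (1 : ℝ) + (z - z i • single i 1)‖ ^ 2 := by
        rw [add_sub_cancel]
    _ = z i ^ 2 + ‖z - z i • single i 1‖ ^ 2 := by
        rw [norm_add_sq_real, horth, norm_smul, PiLp.norm_single]; simp

theorem volume_le_prod_of_forall_apply_mem_Icc {S : Set (EuclideanSpace ℝ ι)} {lo hi : ι → ℝ}
    (hS : ∀ z ∈ S, ∀ i, z i ∈ Set.Icc (lo i) (hi i)) :
    volume S ≤ ∏ i, ENNReal.ofReal (hi i - lo i) :=
  calc volume S ≤ volume (WithLp.ofLp ⁻¹' Set.Icc lo hi) :=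
        measure_mono fun z hz ↦ ⟨fun i ↦ (hS z hz i).1, fun i ↦ (hS z hz i).2⟩
    _ = ∏ i, ENNReal.ofReal (hi i - lo i) := by
        rw [(PiLp.volume_preserving_ofLp ι).measure_preimage measurableSet_Icc.nullMeasurableSet,
          Real.volume_Icc_pi]

theorem volume_le_of_forall_apply_mem_Icc_of_forall_abs_apply_le {S : Set (EuclideanSpace ℝ ι)}
    (i : ι) {b h r : ℝ} (hS : ∀ z ∈ S, z i ∈ Set.Icc (b - h) b ∧ ∀ j ≠ i, |z j| ≤ r) :
    volume S ≤ ENNReal.ofReal h * ENNReal.ofReal (2 * r) ^ (Fintype.card ι - 1) := by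
  calc volume S ≤ ∏ j, ENNReal.ofReal (Function.update (fun _ ↦ r) i b j
        - Function.update (fun _ ↦ -r) i (b - h) j) := by
        refine volume_le_prod_of_forall_apply_mem_Icc fun z hz j ↦ ?_
        rcases eq_or_ne j i with rfl | hj
        · simpa using (hS z hz).1
        · simpa [hj, abs_le] using (hS z hz).2 j hj
    _ = _ := by
        have hside : (fun j ↦ ENNReal.ofReal (Function.update (fun _ ↦ r) i b j
            - Function.update (fun _ ↦ -r) i (b - h) j))
            = Function.update (fun _ ↦ ENNReal.ofReal (2 * r)) i (ENNReal.ofReal h) := by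
          ext1 j
          rcases eq_or_ne j i with rfl | hj
          · simp
          · simp [hj, two_mul]
        rw [hside, Finset.prod_update_of_mem (Finset.mem_univ i), Finset.prod_const,
          Finset.card_univ_sdiff, Finset.card_singleton]

theorem apply_bounds_of_norm_lt_one_of_cone [DecidableEq ι] {z : EuclideanSpace ℝ ι} (i : ι)
    {θ : ℝ} (hθ : 0 ≤ θ) (hz : ‖z‖ < 1) (hcone : -θ * ‖z - z i • single i 1‖ ≤ z i - 1) :
    1 - 2 * θ ^ 2 ≤ z i ∧ ∀ j ≠ i, |z j| ≤ 2 * θ := by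
  have hpyth := norm_sq_eq_sq_apply_add_norm_sub_smul_single z i
  obtain ⟨hw, ht⟩ := le_two_mul_and_one_sub_two_mul_sq_le_of_sq_add_sq_lt_one hθ (norm_nonneg _)
    (hpyth ▸ pow_lt_one₀ (norm_nonneg z) hz two_ne_zero) (by linarith)
  refine ⟨ht, fun j hj ↦ le_trans ?_ hw⟩
  have hzj : (z - z i • single i (1 : ℝ)) j = z j := by simp [hj]
  calc |z j| = ‖(z - z i • single i (1 : ℝ)) j‖ := by rw [hzj, Real.norm_eq_abs]
    _ ≤ ‖z - z i • single i 1‖ := PiLp.norm_apply_le _ j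

end EuclideanSpace

/-- For `A_θ = B_d ∩ {z : −θ|z'| ≤ z₁ − 1 ≤ 0}` (coordinates `z = (z₁, z')`),
`ℓ_d(A_θ) = O(θ^{d+1})` as `θ → 0`; moreover `A_θ` is separated from the origin, the
density `u_d(x) = 1/(a_d |x|^{d-1})` of the spherical uniform is uniformly bounded
above on `A_θ` for small `θ`, and hence `U_d(A_θ) = O(θ^{d+1})`. -/
theorem cap_near_pole_volume (d : ℕ) (hd : 2 ≤ d)
    (e₁ : EuclideanSpace ℝ (Fin d)) (he₁ : e₁ = EuclideanSpace.single (⟨0, by omega⟩ : Fin d) 1)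
    (a : ℝ) (ha : a = 2 * π ^ ((d : ℝ) / 2) / Gamma ((d : ℝ) / 2))
    (u : EuclideanSpace ℝ (Fin d) → ℝ≥0∞)
    (hu : ∀ x, u x = if x ∈ ball (0 : EuclideanSpace ℝ (Fin d)) 1 \ {0}
      then ENNReal.ofReal (1 / (a * ‖x‖ ^ (d - 1))) else 0)
    (A : ℝ → Set (EuclideanSpace ℝ (Fin d)))
    (hA : ∀ θ, A θ = {z | z ∈ ball (0 : EuclideanSpace ℝ (Fin d)) 1 ∧
      -θ * ‖z - z (⟨0, by omega⟩ : Fin d) • e₁‖ ≤ z (⟨0, by omega⟩ : Fin d) - 1 ∧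
      z (⟨0, by omega⟩ : Fin d) - 1 ≤ 0}) :
    ∃ C c Cu C' θ₀ : ℝ, 0 < C ∧ 0 < c ∧ 0 < Cu ∧ 0 < C' ∧ 0 < θ₀ ∧
      ∀ θ : ℝ, 0 < θ → θ < θ₀ →
        volume (A θ) ≤ ENNReal.ofReal (C * θ ^ (d + 1)) ∧
        (∀ z ∈ A θ, c ≤ ‖z‖) ∧
        (∀ z ∈ A θ, u z ≤ ENNReal.ofReal Cu) ∧
        (volume.withDensity u) (A θ) ≤ ENNReal.ofReal (C' * θ ^ (d + 1)) := by
  subst he₁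
  set i : Fin d := ⟨0, by omega⟩
  have ha₀ : 0 < a := ha ▸ by have := Gamma_pos_of_pos (by positivity : (0 : ℝ) < d / 2); positivity
  set Cu : ℝ := 1 / (a * (1 / 2) ^ (d - 1)) with hCu
  refine ⟨2 * 4 ^ (d - 1), 1 / 2, Cu, Cu * (2 * 4 ^ (d - 1)), 1 / 2, by positivity, by norm_num,
    by positivity, by positivity, by norm_num, fun θ hθ hθ₀ ↦ ?_⟩
  have hbounds : ∀ z ∈ A θ, ‖z‖ < 1 ∧ z i ∈ Set.Icc (1 - 2 * θ ^ 2) 1 ∧ ∀ j ≠ i, |z j| ≤ 2 * θ := by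
    intro z hz
    rw [hA] at hz
    obtain ⟨hball, hcone, hle⟩ := hz
    rw [mem_ball_zero_iff] at hball
    obtain ⟨hlo, habs⟩ := EuclideanSpace.apply_bounds_of_norm_lt_one_of_cone i hθ.le hball hcone
    exact ⟨hball, ⟨hlo, by linarith⟩, habs⟩
  have hvol : volume (A θ) ≤ ENNReal.ofReal (2 * 4 ^ (d - 1) * θ ^ (d + 1)) := by
    calc volume (A θ)
        ≤ ENNReal.ofReal (2 * θ ^ 2) * ENNReal.ofReal (2 * (2 * θ)) ^ (Fintype.card (Fin d) - 1) :=
          EuclideanSpace.volume_le_of_forall_apply_mem_Icc_of_forall_abs_apply_le i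
            fun z hz ↦ ⟨by simpa using (hbounds z hz).2.1, (hbounds z hz).2.2⟩
      _ = ENNReal.ofReal (2 * 4 ^ (d - 1) * θ ^ (d + 1)) := by
          rw [Fintype.card_fin, ← ENNReal.ofReal_pow (by positivity),
            ← ENNReal.ofReal_mul (by positivity)]
          congr 1
          rw [show d + 1 = 2 + (d - 1) by omega, pow_add, ← mul_assoc, mul_pow]
          ring
  have hnorm : ∀ z ∈ A θ, 1 / 2 ≤ ‖z‖ := fun z hz ↦ by
    have hcoord := (le_abs_self (z i)).trans (PiLp.norm_apply_le z i)
    nlinarith [(hbounds z hz).2.1.1]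
  have hdens : ∀ z ∈ A θ, u z ≤ ENNReal.ofReal Cu := by
    intro z hz
    have hz₀ : z ≠ 0 := by rintro rfl; have := hnorm 0 hz; norm_num at this
    rw [hu, if_pos ⟨mem_ball_zero_iff.2 (hbounds z hz).1, hz₀⟩, hCu]
    gcongr
    exact hnorm z hz
  refine ⟨hvol, hnorm, hdens, (withDensity_apply_le_mul_of_forall_le hdens).trans ?_⟩
  rw [mul_assoc, ENNReal.ofReal_mul (by positivity)]
  gcongr
end
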